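/- arXiv:2405.16735 — 7 statements merged into one kernel-verified Lean document; each statement's English description precedes it below -/
import Mathlib

section
/- Let P be a payoff perception function and c ∈ ℤ₊ finite. Set v = P(u,c). If v ≠ u, then P(v,c') ≠ u for every finite c' ∈ ℤ₊. -/
variable {U : Type*}

/-- Capability path independence for finite positive capability levels. -/
def PathIndep (P : U → ℕ∞ → U) : Prop :=
  ∀ u : U, ∀ c₁ c₂ : ℕ∞, 1 ≤ c₁ → c₁ ≠ ⊤ → 1 ≤ c₂ → c₂ ≠ ⊤ →
    P (P u c₁) c₂ = P u (min c₁ c₂)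

/-- Perfect perception with infinite capability. -/
def PerfectTop (P : U → ℕ∞ → U) : Prop := ∀ u : U, P u ⊤ = u

/-- The intrinsic capability: the least (positive extended) capability level at
which `u` is perceived perfectly. -/
noncomputable def kappa (P : U → ℕ∞ → U) (u : U) : ℕ∞ :=
  sInf {c : ℕ∞ | 1 ≤ c ∧ P u c = u}

/-- The payoff concretization function `P⁻¹(v, c)`. -/
def concr (P : U → ℕ∞ → U) (v : U) (c : ℕ∞) : Set U :=
  {u : U | P u (max (kappa P v) c) = v}

/-- The narrow concretization set `N(v, c₁, c₂)`. -/
def narrowSet (P : U → ℕ∞ → U) (v : U) (c₁ c₂ : ℕ∞) : Set U :=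
  {u : U | kappa P u ≤ c₂ ∧ P v (min c₁ c₂) = P u (min c₁ c₂)}

/-- Second form of information loss: for finite positive `c`, let
`v = P(u,c)`. If `v ≠ u`, then `P(v,c') ≠ u` for every finite positive `c'`. -/
theorem second_form_of_information_loss
    (P : U → ℕ∞ → U) (hpath : PathIndep P) (htop : PerfectTop P)
    (u : U) (c : ℕ∞) (hc1 : 1 ≤ c) (hc2 : c ≠ ⊤) (h : P u c ≠ u) :
    ∀ c' : ℕ∞, 1 ≤ c' → c' ≠ ⊤ → P (P u c) c' ≠ u := by
  intro c' hc'1 hc'2 heq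
  rw [hpath u c c' hc1 hc2 hc'1 hc'2] at heq
  have hm1 : 1 ≤ min c c' := le_min hc1 hc'1
  have hm2 : min c c' ≠ ⊤ := by
    simp [min_eq_top, hc2]
  have := hpath u (min c c') c hm1 hm2 hc1 hc2
  rw [heq, min_eq_left (min_le_left c c'), heq] at this
  exact h this
end

section
/- Let P be a payoff perception function, v ∈ U, c finite, and set v' = P(v,c). Then for every c' ≥ c, P⁻¹(v, c') ⊆ P⁻¹(v', c), where P⁻¹(w,c) := {u : P(u, max(κ(w),c)) = w}. -/
variable {U : Type*}

/-- Information loss expressed via concretization: if `v' = P(v,c)` with `c`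
finite positive, then for every `c' ≥ c`, `P⁻¹(v, c') ⊆ P⁻¹(v', c)`. -/
theorem concr_of_abstraction
    (P : U → ℕ∞ → U) (hpath : PathIndep P) (htop : PerfectTop P)
    (v : U) (c c' : ℕ∞) (hc1 : 1 ≤ c) (hc2 : c ≠ ⊤) (hcc : c ≤ c') :
    concr P v c' ⊆ concr P (P v c) c := by
  intro u hu
  have hSv' : kappa P (P v c) ≤ c :=
    sInf_le ⟨hc1, by rw [hpath v c c hc1 hc2 hc1 hc2, min_self]⟩
  have hmax : max (kappa P (P v c)) c = c := max_eq_right hSv'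
  simp only [concr, Set.mem_setOf_eq] at hu ⊢
  rw [hmax]
  set M := max (kappa P v) c' with hM
  by_cases hMtop : M = ⊤
  · rw [hMtop, htop u] at hu
    rw [hu]
  · have h1M : 1 ≤ M := le_trans hc1 (le_trans hcc (le_max_right _ _))
    have hcM : c ≤ M := le_trans hcc (le_max_right _ _)
    have h := hpath u M c h1M hMtop hc1 hc2
    rw [hu, min_eq_right hcM] at h
    exact h.symm
end

section
/- Let P be a payoff perception function and define the narrow concretization set N(v,c₁,c₂) := {u ∈ U : κ(u) ≤ c₂ and P(v, min(c₁,c₂)) = P(u, min(c₁,c₂))}. If κ(v) ≤ c₁ < c₂, then N(v,c₁,c₂) ⊆ P⁻¹(v, c₁). -/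
variable {U : Type*}

/-- If `κ(v) ≤ c₁ < c₂`, then the narrow concretization set is contained in the
concretization set: `N(v,c₁,c₂) ⊆ P⁻¹(v,c₁)`. -/
theorem narrowSet_subset_concr
    (P : U → ℕ∞ → U) (hpath : PathIndep P) (htop : PerfectTop P)
    (v : U) (c₁ c₂ : ℕ∞) (hc1 : 1 ≤ c₁) (hk : kappa P v ≤ c₁) (hlt : c₁ < c₂) :
    narrowSet P v c₁ c₂ ⊆ concr P v c₁ := by
  intro u hu
  obtain ⟨-, heq⟩ := hu
  have hc1top : c₁ ≠ ⊤ := hlt.ne_top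
  have hmin : min c₁ c₂ = c₁ := min_eq_left hlt.le
  rw [hmin] at heq
  -- kappa P v is attained
  have hne : {c : ℕ∞ | 1 ≤ c ∧ P v c = v}.Nonempty := ⟨⊤, le_top, htop v⟩
  have hmem : kappa P v ∈ {c : ℕ∞ | 1 ≤ c ∧ P v c = v} := csInf_mem hne
  obtain ⟨hk1, hkfix⟩ := hmem
  have hktop : kappa P v ≠ ⊤ := fun h => hc1top (top_le_iff.mp (h ▸ hk))
  have hPv : P v c₁ = v := by
    have := hpath v (kappa P v) c₁ hk1 hktop hc1 hc1top
    rw [hkfix, min_eq_left hk, hkfix] at this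
    exact this
  show P u (max (kappa P v) c₁) = v
  rw [max_eq_right hk, ← heq, hPv]
end

section
/- Let P be a payoff perception function with narrow concretization set N(v,c₁,c₂) := {u : κ(u) ≤ c₂ and P(v,min(c₁,c₂)) = P(u,min(c₁,c₂))}. If c₁' ≤ c₁, then N(v,c₁,c₂) ⊆ N(P(v,c₁'), c₁', c₂). -/
variable {U : Type*}

/-- If `c₁' ≤ c₁`, then `N(v,c₁,c₂) ⊆ N(P(v,c₁'), c₁', c₂)`. -/
theorem narrowSet_subset_narrowSet_of_abstraction
    (P : U → ℕ∞ → U) (hpath : PathIndep P) (htop : PerfectTop P)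
    (v : U) (c₁ c₁' c₂ : ℕ∞) (hc1' : 1 ≤ c₁') (h : c₁' ≤ c₁) :
    narrowSet P v c₁ c₂ ⊆ narrowSet P (P v c₁') c₁' c₂ := by
  intro u hu
  obtain ⟨hk, heq⟩ := hu
  have hk1 : (1 : ℕ∞) ≤ kappa P u := le_sInf fun c hc => hc.1
  have hc2 : (1 : ℕ∞) ≤ c₂ := hk1.trans hk
  have hc1 : (1 : ℕ∞) ≤ c₁ := hc1'.trans h
  refine ⟨hk, ?_⟩
  by_cases htop1' : c₁' = ⊤
  · subst htop1'
    have hc1t : c₁ = ⊤ := top_le_iff.mp h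
    subst hc1t
    rw [htop v]
    exact heq
  · by_cases htop2 : c₂ = ⊤
    · subst htop2
      simp only [min_eq_left le_top] at heq ⊢
      rw [hpath v c₁' c₁' hc1' htop1' hc1' htop1', min_self]
      by_cases htop1 : c₁ = ⊤
      · subst htop1; rw [htop, htop] at heq; rw [heq]
      · have h1 := hpath v c₁ c₁' hc1 htop1 hc1' htop1'
        have h2 := hpath u c₁ c₁' hc1 htop1 hc1' htop1'
        rw [heq] at h1
        rw [h1, min_eq_right h] at h2
        exact h2
    · -- c₁', c₂ finite
      set m := min c₁' c₂ with hm
      set m' := min c₁ c₂ with hm'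
      have hm1 : (1 : ℕ∞) ≤ m := le_min hc1' hc2
      have hm'1 : (1 : ℕ∞) ≤ m' := le_min hc1 hc2
      have hmt : m ≠ ⊤ := by
        simp [hm, min_eq_top, htop1', htop2]
      have hm't : m' ≠ ⊤ := by
        intro hh
        exact htop2 ((min_eq_top.mp hh).2)
      have hmm : m ≤ m' := min_le_min h le_rfl
      have h1 := hpath v c₁' m hc1' htop1' hm1 hmt
      rw [min_eq_right (min_le_left _ _)] at h1
      rw [h1]
      have h2 := hpath v m' m hm'1 hm't hm1 hmt
      have h3 := hpath u m' m hm'1 hm't hm1 hmt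
      rw [min_eq_right hmm] at h2 h3
      rw [← h2, ← h3, heq]
end

section
/- A constant-gap two-player zero-sum limited-perception game is maximin-attainable: if there exists δ : ℤ₊ → ℝ with P⁺(u,c,x,y) = P⁻(u,c,x,y) + δ(c) for all u, c, x, y, then for any best response function R (R(u,x) minimizes y ↦ P⁺(u,c₂,x,y)), the Stackelberg objective g_R(x) := inf_{u ∈ N(u₁,c₁,c₂)} P⁻(u,c₂,x,R(u,x)) equals the maximin objective h₁(x) := inf_{y ∈ Δ(S₂)} P⁻(u₁,c₁,x,y) for all x ∈ Δ(S₁); hence sup_x g_R(x) = sup_x h₁(x). -/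
variable {U : Type*}

section AuxKappa
variable {P : U → ℕ∞ → U}

lemma kappa_mem (htop : PerfectTop P) (u : U) :
    1 ≤ kappa P u ∧ P u (kappa P u) = u :=
  csInf_mem (⟨⊤, le_top, htop u⟩ : {c : ℕ∞ | 1 ≤ c ∧ P u c = u}.Nonempty)

lemma fix_of_kappa_le (hpath : PathIndep P) (htop : PerfectTop P) {u : U} {c : ℕ∞}
    (hc1 : 1 ≤ c) (hct : c ≠ ⊤) (h : kappa P u ≤ c) : P u c = u := by
  obtain ⟨hk1, hk⟩ := kappa_mem htop u
  have hkt : kappa P u ≠ ⊤ := fun h' => hct (top_le_iff.mp (h' ▸ h))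
  calc P u c = P (P u (kappa P u)) c := by rw [hk]
    _ = P u (min (kappa P u) c) := hpath u _ c hk1 hkt hc1 hct
    _ = u := by rw [min_eq_left h, hk]

lemma kappa_P_le (hpath : PathIndep P) {c : ℕ∞} (u : U) (hc1 : 1 ≤ c) (hct : c ≠ ⊤) :
    kappa P (P u c) ≤ c :=
  sInf_le ⟨hc1, by rw [hpath u c c hc1 hct hc1 hct, min_self]⟩

lemma self_mem_concr (hpath : PathIndep P) (htop : PerfectTop P) (v : U) {c : ℕ∞}
    (hc1 : 1 ≤ c) (hct : c ≠ ⊤) : v ∈ concr P v c := by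
  rcases le_or_gt (kappa P v) c with h | h
  · show P v (max (kappa P v) c) = v
    rw [max_eq_right h]; exact fix_of_kappa_le hpath htop hc1 hct h
  · show P v (max (kappa P v) c) = v
    rw [max_eq_left h.le]; exact (kappa_mem htop v).2

lemma concr_eq_of_kappa_le {v : U} {c : ℕ∞} (h : kappa P v ≤ c) :
    concr P v c = {w : U | P w c = v} := by
  unfold concr; rw [max_eq_right h]

end AuxKappa

variable {S₁ S₂ : Type*} [Fintype S₁] [Fintype S₂]

/-- The bilinear extension of a two-player payoff function. -/
def pay (u : S₁ → S₂ → ℝ) (x : S₁ → ℝ) (y : S₂ → ℝ) : ℝ :=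
  ∑ a, ∑ b, x a * u a b * y b


lemma pay_abs_le {u : S₁ → S₂ → ℝ} {x : S₁ → ℝ} {y : S₂ → ℝ} {b : ℝ}
    (hu : ∀ a bb, |u a bb| ≤ b) (hx : x ∈ stdSimplex ℝ S₁) (hy : y ∈ stdSimplex ℝ S₂) :
    |pay u x y| ≤ b := by
  calc |pay u x y| ≤ ∑ a, ∑ bb, |x a * u a bb * y bb| := by
        refine (Finset.abs_sum_le_sum_abs _ _).trans ?_
        exact Finset.sum_le_sum fun a _ => Finset.abs_sum_le_sum_abs _ _
    _ ≤ ∑ a, ∑ bb, x a * b * y bb := by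
        refine Finset.sum_le_sum fun a _ => Finset.sum_le_sum fun bb _ => ?_
        rw [abs_mul, abs_mul, abs_of_nonneg (hx.1 a), abs_of_nonneg (hy.1 bb)]
        exact mul_le_mul_of_nonneg_right
          (mul_le_mul_of_nonneg_left (hu a bb) (hx.1 a)) (hy.1 bb)
    _ = b := by
        have h1 : ∀ a : S₁, ∑ bb, x a * b * y bb = x a * b := by
          intro a; rw [← Finset.mul_sum, hy.2, mul_one]
        simp only [h1]
        rw [← Finset.sum_mul, hx.2, one_mul]

/-- The lower bound `P⁻(v, c, x, y)` of the expected true payoff. -/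
noncomputable def Pm (P : (S₁ → S₂ → ℝ) → ℕ∞ → (S₁ → S₂ → ℝ))
    (v : S₁ → S₂ → ℝ) (c : ℕ∞) (x : S₁ → ℝ) (y : S₂ → ℝ) : ℝ :=
  sInf {z : ℝ | ∃ w ∈ concr P v c, z = pay w x y}

/-- The upper bound `P⁺(v, c, x, y)` of the expected true payoff. -/
noncomputable def Pp (P : (S₁ → S₂ → ℝ) → ℕ∞ → (S₁ → S₂ → ℝ))
    (v : S₁ → S₂ → ℝ) (c : ℕ∞) (x : S₁ → ℝ) (y : S₂ → ℝ) : ℝ :=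
  sSup {z : ℝ | ∃ w ∈ concr P v c, z = pay w x y}

/-- Bounded concretization property of a payoff perception function. -/
def BoundedConcr (P : (S₁ → S₂ → ℝ) → ℕ∞ → (S₁ → S₂ → ℝ)) : Prop :=
  ∀ v : S₁ → S₂ → ℝ, ∃ b : ℝ, ∀ u : S₁ → S₂ → ℝ, ∀ c : ℕ∞,
    P u c = v → ∀ a bb, |u a bb| ≤ b

/-- Oddness of a payoff perception function (zero-sum compatibility). -/
def OddPerc (P : (S₁ → S₂ → ℝ) → ℕ∞ → (S₁ → S₂ → ℝ)) : Prop :=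
  ∀ u c, P (-u) c = - P u c

/-- A constant-gap TZOLP-game instance is maximin-attainable: if
`P⁺(u,c,x,y) = P⁻(u,c,x,y) + δ(c)` for all `u, c, x, y`, then for any best
response function `R`, the Stackelberg objective
`g_R(x) = inf_{u ∈ N(u₁,c₁,c₂)} P⁻(u,c₂,x,R(u,x))` equals the maximin
objective `h₁(x) = inf_{y ∈ Δ(S₂)} P⁻(u₁,c₁,x,y)` for all `x ∈ Δ(S₁)`;
hence `sup_x g_R(x) = sup_x h₁(x)`. -/
theorem constant_gap_maximin_attainable
    (P : (S₁ → S₂ → ℝ) → ℕ∞ → (S₁ → S₂ → ℝ))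
    (hpath : PathIndep P) (htop : PerfectTop P) (hbdd : BoundedConcr P)
    (hodd : OddPerc P)
    (u₁ : S₁ → S₂ → ℝ) (c₁ c₂ : ℕ∞) (hc1 : 1 ≤ c₁) (h12 : c₁ ≤ c₂) (hc2 : c₂ ≠ ⊤)
    (δ : ℕ∞ → ℝ)
    (hgap : ∀ u : S₁ → S₂ → ℝ, ∀ c : ℕ∞, 1 ≤ c → c ≠ ⊤ →
      ∀ x ∈ stdSimplex ℝ S₁, ∀ y ∈ stdSimplex ℝ S₂,
        Pp P u c x y = Pm P u c x y + δ c)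
    (R : (S₁ → S₂ → ℝ) → (S₁ → ℝ) → (S₂ → ℝ))
    (hR : ∀ u' ∈ narrowSet P u₁ c₁ c₂, ∀ x ∈ stdSimplex ℝ S₁,
      R u' x ∈ stdSimplex ℝ S₂ ∧
        ∀ y ∈ stdSimplex ℝ S₂, Pp P u' c₂ x (R u' x) ≤ Pp P u' c₂ x y) :
    (∀ x ∈ stdSimplex ℝ S₁,
      sInf {z : ℝ | ∃ u' ∈ narrowSet P u₁ c₁ c₂, z = Pm P u' c₂ x (R u' x)}
        = sInf {z : ℝ | ∃ y ∈ stdSimplex ℝ S₂, z = Pm P u₁ c₁ x y}) ∧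
    sSup {w : ℝ | ∃ x ∈ stdSimplex ℝ S₁,
        w = sInf {z : ℝ | ∃ u' ∈ narrowSet P u₁ c₁ c₂, z = Pm P u' c₂ x (R u' x)}}
      = sSup {w : ℝ | ∃ x ∈ stdSimplex ℝ S₁,
          w = sInf {z : ℝ | ∃ y ∈ stdSimplex ℝ S₂, z = Pm P u₁ c₁ x y}} := by
  have hc1t : c₁ ≠ ⊤ := fun h => hc2 (top_le_iff.mp (h ▸ h12))
  have hc21 : 1 ≤ c₂ := hc1.trans h12
  have hmin : min c₁ c₂ = c₁ := min_eq_left h12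
  have hkv : kappa P (P u₁ c₁) ≤ c₁ := kappa_P_le hpath u₁ hc1 hc1t
  have hDconcr : concr P (P u₁ c₁) c₁ = {w | P w c₁ = P u₁ c₁} := concr_eq_of_kappa_le hkv
  obtain ⟨b, hb⟩ := hbdd (P u₁ c₁)
  have hmemD : ∀ w ∈ concr P (P u₁ c₁) c₁, P w c₁ = P u₁ c₁ := fun w hw => by
    rwa [hDconcr] at hw
  have hCsubD : concr P u₁ c₁ ⊆ concr P (P u₁ c₁) c₁ := by
    intro w hw
    rw [hDconcr]
    have hw' : P w (max (kappa P u₁) c₁) = u₁ := hw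
    by_cases hkt : kappa P u₁ = ⊤
    · have hwu : w = u₁ := by rw [hkt, max_eq_left le_top, htop w] at hw'; exact hw'
      show P w c₁ = P u₁ c₁
      rw [hwu]
    · have hM1 : 1 ≤ max (kappa P u₁) c₁ := hc1.trans (le_max_right _ _)
      have hMt : max (kappa P u₁) c₁ ≠ ⊤ := (max_lt (lt_top_iff_ne_top.mpr hkt) (lt_top_iff_ne_top.mpr hc1t)).ne
      show P w c₁ = P u₁ c₁
      have h := hpath w (max (kappa P u₁) c₁) c₁ hM1 hMt hc1 hc1t
      rw [hw', min_eq_right (le_max_right _ _)] at h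
      exact h.symm
  have hpayD : ∀ x ∈ stdSimplex ℝ S₁, ∀ y ∈ stdSimplex ℝ S₂, ∀ w ∈ concr P (P u₁ c₁) c₁,
      |pay w x y| ≤ b := fun x hx y hy w hw => pay_abs_le (hb w c₁ (hmemD w hw)) hx hy
  have hNmem : P u₁ c₂ ∈ narrowSet P u₁ c₁ c₂ := by
    refine ⟨kappa_P_le hpath u₁ hc21 hc2, ?_⟩
    rw [hmin]
    have h := hpath u₁ c₂ c₁ hc21 hc2 hc1 hc1t
    rw [min_eq_right h12] at h
    exact h.symm
  have hconcr₂ : ∀ u' ∈ narrowSet P u₁ c₁ c₂, concr P u' c₂ = {w | P w c₂ = u'} :=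
    fun u' hu' => concr_eq_of_kappa_le hu'.1
  have hsubD : ∀ u' ∈ narrowSet P u₁ c₁ c₂, concr P u' c₂ ⊆ concr P (P u₁ c₁) c₁ := by
    intro u' hu' w hw
    rw [hconcr₂ u' hu'] at hw
    rw [hDconcr]
    have h1 : P u' c₁ = P w c₁ := by
      have h := hpath w c₂ c₁ hc21 hc2 hc1 hc1t
      rw [min_eq_right h12, hw] at h
      exact h
    have h2 : P u₁ c₁ = P u' c₁ := by have h := hu'.2; rwa [hmin] at h
    show P w c₁ = P u₁ c₁
    rw [← h1, ← h2]
  have hwN : ∀ w ∈ concr P (P u₁ c₁) c₁,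
      P w c₂ ∈ narrowSet P u₁ c₁ c₂ ∧ w ∈ concr P (P w c₂) c₂ := by
    intro w hw
    have hwD := hmemD w hw
    have hκ : kappa P (P w c₂) ≤ c₂ := kappa_P_le hpath w hc21 hc2
    refine ⟨⟨hκ, ?_⟩, ?_⟩
    · rw [hmin]
      have h := hpath w c₂ c₁ hc21 hc2 hc1 hc1t
      rw [min_eq_right h12, hwD] at h
      exact h.symm
    · rw [concr_eq_of_kappa_le hκ]
      exact rfl
  have hkey : ∀ x ∈ stdSimplex ℝ S₁, ∀ y ∈ stdSimplex ℝ S₂,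
      Pm P u₁ c₁ x y = Pm P (P u₁ c₁) c₁ x y := by
    intro x hx y hy
    have hAB : {z : ℝ | ∃ w ∈ concr P u₁ c₁, z = pay w x y}
        ⊆ {z : ℝ | ∃ w ∈ concr P (P u₁ c₁) c₁, z = pay w x y} := by
      rintro z ⟨w, hw, rfl⟩; exact ⟨w, hCsubD hw, rfl⟩
    have hAne : {z : ℝ | ∃ w ∈ concr P u₁ c₁, z = pay w x y}.Nonempty :=
      ⟨pay u₁ x y, u₁, self_mem_concr hpath htop u₁ hc1 hc1t, rfl⟩
    have hBbb : BddBelow {z : ℝ | ∃ w ∈ concr P (P u₁ c₁) c₁, z = pay w x y} := by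
      refine ⟨-b, ?_⟩; rintro z ⟨w, hw, rfl⟩
      exact (abs_le.mp (hpayD x hx y hy w hw)).1
    have hBba : BddAbove {z : ℝ | ∃ w ∈ concr P (P u₁ c₁) c₁, z = pay w x y} := by
      refine ⟨b, ?_⟩; rintro z ⟨w, hw, rfl⟩
      exact (abs_le.mp (hpayD x hx y hy w hw)).2
    have h1 : Pm P (P u₁ c₁) c₁ x y ≤ Pm P u₁ c₁ x y := csInf_le_csInf hBbb hAne hAB
    have h2 : Pp P u₁ c₁ x y ≤ Pp P (P u₁ c₁) c₁ x y := csSup_le_csSup hBba hAne hAB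
    have g1 := hgap u₁ c₁ hc1 hc1t x hx y hy
    have g2 := hgap (P u₁ c₁) c₁ hc1 hc1t x hx y hy
    linarith
  have hPmle : ∀ u' ∈ narrowSet P u₁ c₁ c₂, ∀ x ∈ stdSimplex ℝ S₁, ∀ y ∈ stdSimplex ℝ S₂,
      Pm P u₁ c₁ x y ≤ Pm P u' c₂ x y := by
    intro u' hu' x hx y hy
    rw [hkey x hx y hy]
    refine csInf_le_csInf ⟨-b, ?_⟩ ⟨pay u' x y, u', ?_, rfl⟩ ?_
    · rintro z ⟨w, hw, rfl⟩; exact (abs_le.mp (hpayD x hx y hy w hw)).1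
    · rw [hconcr₂ u' hu']; exact fix_of_kappa_le hpath htop hc21 hc2 hu'.1
    · rintro z ⟨w, hw, rfl⟩; exact ⟨w, hsubD u' hu' hw, rfl⟩
  have key : ∀ x ∈ stdSimplex ℝ S₁,
      sInf {z : ℝ | ∃ u' ∈ narrowSet P u₁ c₁ c₂, z = Pm P u' c₂ x (R u' x)}
        = sInf {z : ℝ | ∃ y ∈ stdSimplex ℝ S₂, z = Pm P u₁ c₁ x y} := by
    intro x hx
    have hPmlb : ∀ u' ∈ narrowSet P u₁ c₁ c₂, ∀ y ∈ stdSimplex ℝ S₂,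
        -b ≤ Pm P u' c₂ x y := by
      intro u' hu' y hy
      refine le_csInf ⟨pay u' x y, u', ?_, rfl⟩ ?_
      · rw [hconcr₂ u' hu']; exact fix_of_kappa_le hpath htop hc21 hc2 hu'.1
      · rintro z ⟨w, hw, rfl⟩
        exact (abs_le.mp (hpayD x hx y hy w (hsubD u' hu' hw))).1
    have hHlb : ∀ z ∈ {z : ℝ | ∃ y ∈ stdSimplex ℝ S₂, z = Pm P u₁ c₁ x y}, -b ≤ z := by
      rintro z ⟨y, hy, rfl⟩
      refine le_csInf ⟨pay u₁ x y, u₁, self_mem_concr hpath htop u₁ hc1 hc1t, rfl⟩ ?_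
      rintro z ⟨w, hw, rfl⟩
      exact (abs_le.mp (hpayD x hx y hy w (hCsubD hw))).1
    have hGlb : ∀ z ∈ {z : ℝ | ∃ u' ∈ narrowSet P u₁ c₁ c₂, z = Pm P u' c₂ x (R u' x)},
        -b ≤ z := by
      rintro z ⟨u', hu', rfl⟩
      exact hPmlb u' hu' _ (hR u' hu' x hx).1
    have hGne : {z : ℝ | ∃ u' ∈ narrowSet P u₁ c₁ c₂, z = Pm P u' c₂ x (R u' x)}.Nonempty :=
      ⟨_, P u₁ c₂, hNmem, rfl⟩
    have hHne : {z : ℝ | ∃ y ∈ stdSimplex ℝ S₂, z = Pm P u₁ c₁ x y}.Nonempty :=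
      ⟨_, R (P u₁ c₂) x, (hR _ hNmem x hx).1, rfl⟩
    refine le_antisymm ?_ ?_
    · refine le_csInf hHne ?_
      rintro z ⟨y, hy, rfl⟩
      rw [hkey x hx y hy]
      refine le_csInf ⟨pay (P u₁ c₁) x y, P u₁ c₁,
        self_mem_concr hpath htop (P u₁ c₁) hc1 hc1t, rfl⟩ ?_
      rintro t ⟨w, hw, rfl⟩
      obtain ⟨hN', hwc⟩ := hwN w hw
      have hstep1 : sInf {z : ℝ | ∃ u' ∈ narrowSet P u₁ c₁ c₂, z = Pm P u' c₂ x (R u' x)}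
          ≤ Pm P (P w c₂) c₂ x (R (P w c₂) x) :=
        csInf_le ⟨-b, hGlb⟩ ⟨P w c₂, hN', rfl⟩
      have hstep2 : Pm P (P w c₂) c₂ x (R (P w c₂) x) ≤ Pm P (P w c₂) c₂ x y := by
        have h1 := (hR _ hN' x hx).2 y hy
        have g1 := hgap (P w c₂) c₂ hc21 hc2 x hx _ (hR _ hN' x hx).1
        have g2 := hgap (P w c₂) c₂ hc21 hc2 x hx y hy
        linarith
      have hstep3 : Pm P (P w c₂) c₂ x y ≤ pay w x y := by
        refine csInf_le ⟨-b, ?_⟩ ⟨w, hwc, rfl⟩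
        rintro z ⟨w', hw', rfl⟩
        exact (abs_le.mp (hpayD x hx y hy w' (hsubD _ hN' hw'))).1
      linarith
    · refine le_csInf hGne ?_
      rintro z ⟨u', hu', rfl⟩
      have h1 : sInf {z : ℝ | ∃ y ∈ stdSimplex ℝ S₂, z = Pm P u₁ c₁ x y}
          ≤ Pm P u₁ c₁ x (R u' x) :=
        csInf_le ⟨-b, hHlb⟩ ⟨R u' x, (hR u' hu' x hx).1, rfl⟩
      exact h1.trans (hPmle u' hu' x hx _ (hR u' hu' x hx).1)
  refine ⟨key, ?_⟩
  congr 1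
  ext w
  simp only [Set.mem_setOf_eq]
  constructor
  · rintro ⟨x, hx, rfl⟩; exact ⟨x, hx, key x hx⟩
  · rintro ⟨x, hx, rfl⟩; exact ⟨x, hx, (key x hx).symm⟩
end

section
/- Let A ∈ ℝ^{m×n} with rank r, let A_r denote a best rank-r approximation of a matrix B obtained by truncated SVD with A ∈ {rank-r SVD truncations of B}, and suppose σ_{r+1}(B) ≤ σ, where σ_{r+1}(B) is the (r+1)-th singular value. Then for all x ∈ ℝ^m and y ∈ ℝ^n: |xᵀBy − xᵀAy| ≤ σ_{r+1}(B) · ‖N(Aᵀ)ᵀ x‖₂ · ‖N(A)ᵀ y‖₂ ≤ σ_{r+1}(B) · ‖x‖₂ · ‖y‖₂, where N(M) is a matrix whose columns form an orthonormal basis of the null space of M. -/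
/-!
On the discarded singular triples, `B - A = Uₜ Σₜ Vₜᵀ`, so `x ⬝ (B - A) y = (Uₜᵀ x) ⬝ Σₜ (Vₜᵀ y)`,
which Cauchy–Schwarz bounds by `σ_{r+1} ‖Uₜᵀ x‖ ‖Vₜᵀ y‖`. The discarded left singular vectors are
orthogonal to the kept ones, hence lie in the null space of `Aᵀ`: `Uₜ = N (Nᵀ Uₜ)` for the null
basis `N`, and `Nᵀ Uₜ` again has orthonormal columns. Bessel's inequality for it gives
`‖Uₜᵀ x‖ = ‖(Nᵀ Uₜ)ᵀ Nᵀ x‖ ≤ ‖Nᵀ x‖`, and likewise on the right; Bessel for `N` itself gives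
`‖Nᵀ x‖ ≤ ‖x‖`.
-/

open Matrix

namespace Matrix

variable {R l m n k k' ι κ κ' : Type*}

theorem transpose_submatrix_mul_submatrix [Fintype m] [NonUnitalNonAssocSemiring R]
    (M : Matrix m ι R) (f : κ → ι) (g : κ' → ι) :
    (M.submatrix id f)ᵀ * M.submatrix id g = (Mᵀ * M).submatrix f g := by
  rw [transpose_submatrix, submatrix_mul _ _ _ _ _ Function.bijective_id]

section Orthonormal

variable [Fintype m] [NonAssocSemiring R] [DecidableEq ι] {M : Matrix m ι R}

theorem transpose_submatrix_mul_submatrix_self [DecidableEq κ] (hM : Mᵀ * M = 1) {f : κ → ι}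
    (hf : f.Injective) : (M.submatrix id f)ᵀ * M.submatrix id f = 1 := by
  rw [transpose_submatrix_mul_submatrix, hM, submatrix_one f hf]

theorem transpose_submatrix_mul_submatrix_eq_zero (hM : Mᵀ * M = 1) {f : κ → ι} {g : κ' → ι}
    (hfg : ∀ i j, f i ≠ g j) : (M.submatrix id f)ᵀ * M.submatrix id g = 0 := by
  rw [transpose_submatrix_mul_submatrix, hM]
  ext i j
  simp [hfg i j]

end Orthonormal

section SingularTriples

variable [Fintype ι] [DecidableEq ι]

theorem mul_diagonal_mul_transpose_apply [NonUnitalNonAssocSemiring R]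
    (U : Matrix m ι R) (s : ι → R) (V : Matrix n ι R) (a : m) (b : n) :
    (U * diagonal s * Vᵀ) a b = ∑ i, U a i * s i * V b i := by
  simp [mul_apply, diagonal_apply]

theorem mul_diagonal_ite_mul_transpose [NonAssocSemiring R] (U : Matrix m ι R)
    (V : Matrix n ι R) (p : ι → Prop) [DecidablePred p] (s : ι → R) :
    U * diagonal (fun i => if p i then s i else 0) * Vᵀ =
      U.submatrix id (Subtype.val : {i // p i} → ι) * diagonal (fun i : {i // p i} => s i) *
        (V.submatrix id (Subtype.val : {i // p i} → ι))ᵀ := by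
  ext a b
  simp only [mul_diagonal_mul_transpose_apply, submatrix_apply, id, mul_ite, ite_mul, mul_zero,
    zero_mul]
  rw [← Finset.sum_filter, Finset.sum_subtype _ (p := p) (by simp)]

theorem dotProduct_mul_diagonal_mul_transpose_mulVec [Fintype m] [Fintype n] [CommSemiring R]
    (x : m → R) (U : Matrix m ι R) (s : ι → R) (V : Matrix n ι R) (y : n → R) :
    x ⬝ᵥ (U * diagonal s * Vᵀ) *ᵥ y = (Uᵀ *ᵥ x) ⬝ᵥ diagonal s *ᵥ (Vᵀ *ᵥ y) := by
  rw [← mulVec_mulVec, ← mulVec_mulVec, dotProduct_mulVec, mulVec_transpose, mulVec_transpose]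

end SingularTriples

section Bessel

variable [Fintype m] [Fintype k] [DecidableEq k] [Fintype κ]

theorem mul_transpose_mul_eq_self_of_mul_eq_zero [Fintype l] [DecidableEq κ] [CommSemiring R]
    {N : Matrix m k R} (hN : Nᵀ * N = 1) {C : Matrix l m R}
    (hCN : ∀ w, C *ᵥ w = 0 → ∃ z, N *ᵥ z = w) {W : Matrix m κ R} (hCW : C * W = 0) :
    N * (Nᵀ * W) = W := by
  refine ext_of_mulVec_single fun j => ?_
  obtain ⟨z, hz⟩ := hCN (W *ᵥ Pi.single j 1) (by rw [mulVec_mulVec, hCW, zero_mulVec])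
  rw [← mulVec_mulVec, ← mulVec_mulVec, ← hz, mulVec_mulVec z Nᵀ, hN, one_mulVec]

theorem sum_sq_transpose_mulVec_le {N : Matrix m k ℝ} (hN : Nᵀ * N = 1) (w : m → ℝ) :
    ∑ i, (Nᵀ *ᵥ w) i ^ 2 ≤ ∑ i, w i ^ 2 := by
  set c := Nᵀ *ᵥ w
  have hNc : N *ᵥ c ⬝ᵥ N *ᵥ c = c ⬝ᵥ c := by
    rw [dotProduct_mulVec, ← mulVec_transpose, mulVec_mulVec, hN, one_mulVec]
  have hwc : w ⬝ᵥ N *ᵥ c = c ⬝ᵥ c := by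
    rw [dotProduct_mulVec, ← mulVec_transpose]
  -- `w - N c` is the component of `w` orthogonal to the columns of `N`
  have hres : (w - N *ᵥ c) ⬝ᵥ (w - N *ᵥ c) = w ⬝ᵥ w - c ⬝ᵥ c := by
    rw [sub_dotProduct, dotProduct_sub, dotProduct_sub, dotProduct_comm (N *ᵥ c), hNc, hwc]
    ring
  have hnonneg : 0 ≤ (w - N *ᵥ c) ⬝ᵥ (w - N *ᵥ c) :=
    Finset.sum_nonneg fun i _ => mul_self_nonneg _
  simp only [dotProduct, ← sq] at hres hnonneg
  linarith

theorem sum_sq_transpose_mulVec_le_of_mul_eq_zero [Fintype l] [DecidableEq κ]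
    {N : Matrix m k ℝ} (hN : Nᵀ * N = 1) {C : Matrix l m ℝ}
    (hCN : ∀ w, C *ᵥ w = 0 → ∃ z, N *ᵥ z = w) {W : Matrix m κ ℝ} (hW : Wᵀ * W = 1)
    (hCW : C * W = 0) (x : m → ℝ) :
    ∑ i, (Wᵀ *ᵥ x) i ^ 2 ≤ ∑ i, (Nᵀ *ᵥ x) i ^ 2 := by
  have hNW := mul_transpose_mul_eq_self_of_mul_eq_zero hN hCN hCW
  have hWx : Wᵀ *ᵥ x = (Nᵀ * W)ᵀ *ᵥ (Nᵀ *ᵥ x) := by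
    conv_lhs => rw [← hNW]
    rw [mulVec_mulVec, transpose_mul, transpose_mul]
  have hNW_orth : (Nᵀ * W)ᵀ * (Nᵀ * W) = 1 := by
    rw [transpose_mul, transpose_transpose, Matrix.mul_assoc, hNW, hW]
  rw [hWx]
  exact sum_sq_transpose_mulVec_le hNW_orth _

end Bessel

theorem abs_dotProduct_diagonal_mulVec_le [Fintype ι] [DecidableEq ι] {s : ι → ℝ} {σ : ℝ}
    (hσ : 0 ≤ σ) (hs : ∀ i, |s i| ≤ σ) (c d : ι → ℝ) :
    |c ⬝ᵥ diagonal s *ᵥ d| ≤ σ * √(∑ i, c i ^ 2) * √(∑ i, d i ^ 2) := by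
  have hsd : √(∑ i, (s i * d i) ^ 2) ≤ σ * √(∑ i, d i ^ 2) := by
    rw [← Real.sqrt_sq hσ, ← Real.sqrt_mul (sq_nonneg σ), Finset.mul_sum]
    gcongr with i
    rw [mul_pow]
    exact mul_le_mul_of_nonneg_right (sq_le_sq' (abs_le.mp (hs i)).1 (abs_le.mp (hs i)).2)
      (sq_nonneg _)
  calc |c ⬝ᵥ diagonal s *ᵥ d| = |∑ i, c i * (s i * d i)| := by
        simp only [dotProduct, mulVec_diagonal]
    _ ≤ √(∑ i, c i ^ 2) * √(∑ i, (s i * d i) ^ 2) := by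
        rw [← Real.sqrt_mul (Finset.sum_nonneg fun i _ => sq_nonneg _)]
        exact Real.abs_le_sqrt (Finset.sum_mul_sq_le_sq_mul_sq _ _ _)
    _ ≤ σ * √(∑ i, c i ^ 2) * √(∑ i, d i ^ 2) := by
        rw [mul_comm σ, mul_assoc]
        gcongr

theorem abs_dotProduct_mulVec_sub_truncation_le [Fintype m] [Fintype n] [Fintype k] [Fintype k']
    [DecidableEq k] [DecidableEq k'] [Fintype ι] [DecidableEq ι]
    {U : Matrix m ι ℝ} {V : Matrix n ι ℝ} (hU : Uᵀ * U = 1) (hV : Vᵀ * V = 1)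
    (p : ι → Prop) [DecidablePred p] {s : ι → ℝ} {σ : ℝ} (hσ : 0 ≤ σ)
    (hs : ∀ i, ¬p i → |s i| ≤ σ) {B A : Matrix m n ℝ} (hB : B = U * diagonal s * Vᵀ)
    (hA : A = U * diagonal (fun i => if p i then s i else 0) * Vᵀ)
    {N : Matrix n k ℝ} (hN : Nᵀ * N = 1) (hAN : ∀ y, A *ᵥ y = 0 → ∃ z, N *ᵥ z = y)
    {N' : Matrix m k' ℝ} (hN' : N'ᵀ * N' = 1) (hAN' : ∀ x, Aᵀ *ᵥ x = 0 → ∃ z, N' *ᵥ z = x)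
    (x : m → ℝ) (y : n → ℝ) :
    |x ⬝ᵥ B *ᵥ y - x ⬝ᵥ A *ᵥ y| ≤ σ * √(∑ i, (N'ᵀ *ᵥ x) i ^ 2) * √(∑ i, (Nᵀ *ᵥ y) i ^ 2) := by
  set Ut := U.submatrix id (Subtype.val : {i // ¬p i} → ι)
  set Vt := V.submatrix id (Subtype.val : {i // ¬p i} → ι)
  set Up := U.submatrix id (Subtype.val : {i // p i} → ι)
  set Vp := V.submatrix id (Subtype.val : {i // p i} → ι)
  have hdisj : ∀ (i : {i // p i}) (j : {i // ¬p i}), i.1 ≠ j.1 := fun i j h => j.2 (h ▸ i.2)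
  have hAp : A = Up * diagonal (fun i : {i // p i} => s i) * Vpᵀ :=
    hA.trans (mul_diagonal_ite_mul_transpose U V p s)
  have hBA : B - A = Ut * diagonal (fun i : {i // ¬p i} => s i) * Vtᵀ := by
    rw [hB, hA, ← mul_diagonal_ite_mul_transpose, ← Matrix.sub_mul, ← Matrix.mul_sub, diagonal_sub]
    congr 3 with i
    split_ifs <;> simp
  have hAUt : Aᵀ * Ut = 0 := by
    rw [hAp, transpose_mul, transpose_mul, transpose_transpose, Matrix.mul_assoc, Matrix.mul_assoc,
      transpose_submatrix_mul_submatrix_eq_zero hU hdisj, Matrix.mul_zero, Matrix.mul_zero]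
  have hAVt : A * Vt = 0 := by
    rw [hAp, Matrix.mul_assoc, transpose_submatrix_mul_submatrix_eq_zero hV hdisj, Matrix.mul_zero]
  rw [← dotProduct_sub, ← sub_mulVec, hBA, dotProduct_mul_diagonal_mul_transpose_mulVec]
  calc _ ≤ σ * √(∑ i, (Utᵀ *ᵥ x) i ^ 2) * √(∑ i, (Vtᵀ *ᵥ y) i ^ 2) :=
        abs_dotProduct_diagonal_mulVec_le hσ (fun i => hs i.1 i.2) _ _
    _ ≤ _ := by
        gcongr
        · exact sum_sq_transpose_mulVec_le_of_mul_eq_zero hN' hAN'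
            (transpose_submatrix_mul_submatrix_self hU Subtype.val_injective) hAUt x
        · exact sum_sq_transpose_mulVec_le_of_mul_eq_zero hN hAN
            (transpose_submatrix_mul_submatrix_self hV Subtype.val_injective) hAVt y

end Matrix

theorem svd_truncation_error_bound_general (m n r : ℕ)
    (B A : Matrix (Fin m) (Fin n) ℝ)
    (Um : Matrix (Fin m) (Fin m) ℝ) (Vm : Matrix (Fin n) (Fin n) ℝ)
    (s : Fin (min m n) → ℝ)
    (hU : Um.transpose * Um = 1) (hV : Vm.transpose * Vm = 1)
    (hmono : Antitone s) (hnonneg : ∀ i, 0 ≤ s i)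
    (hB : ∀ a b, B a b = ∑ i : Fin (min m n),
      s i * Um a (Fin.castLE (Nat.min_le_left m n) i) *
        Vm b (Fin.castLE (Nat.min_le_right m n) i))
    (hA : ∀ a b, A a b = ∑ i : Fin (min m n), if (i : ℕ) < r then
      s i * Um a (Fin.castLE (Nat.min_le_left m n) i) *
        Vm b (Fin.castLE (Nat.min_le_right m n) i) else 0)
    -- the (r+1)-th singular value of B
    (σnext : ℝ) (hσ : σnext = if h : r < min m n then s ⟨r, h⟩ else 0)
    -- orthonormal bases of the null spaces of A and Aᵀ
    (k k' : ℕ)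
    (NA : Matrix (Fin n) (Fin k) ℝ) (NAt : Matrix (Fin m) (Fin k') ℝ)
    (hNA1 : NA.transpose * NA = 1)
    (hNA2 : ∀ y : Fin n → ℝ, A.mulVec y = 0 ↔ ∃ z, NA.mulVec z = y)
    (hNAt1 : NAt.transpose * NAt = 1)
    (hNAt2 : ∀ x : Fin m → ℝ, A.transpose.mulVec x = 0 ↔ ∃ z, NAt.mulVec z = x)
    (x : Fin m → ℝ) (y : Fin n → ℝ) :
    |x ⬝ᵥ B.mulVec y - x ⬝ᵥ A.mulVec y|
        ≤ σnext * Real.sqrt (∑ i, (NAt.transpose.mulVec x i) ^ 2)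
            * Real.sqrt (∑ i, (NA.transpose.mulVec y i) ^ 2) ∧
      σnext * Real.sqrt (∑ i, (NAt.transpose.mulVec x i) ^ 2)
          * Real.sqrt (∑ i, (NA.transpose.mulVec y i) ^ 2)
        ≤ σnext * Real.sqrt (∑ i, (x i) ^ 2) * Real.sqrt (∑ i, (y i) ^ 2) := by
  set U := Um.submatrix id (Fin.castLE (Nat.min_le_left m n))
  set V := Vm.submatrix id (Fin.castLE (Nat.min_le_right m n))
  have hσ0 : 0 ≤ σnext := by
    rw [hσ]
    split_ifs
    exacts [hnonneg _, le_rfl]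
  have hs : ∀ i : Fin (min m n), ¬(i : ℕ) < r → |s i| ≤ σnext := by
    intro i hi
    rw [not_lt] at hi
    rw [abs_of_nonneg (hnonneg i), hσ, dif_pos (hi.trans_lt i.isLt)]
    exact hmono hi
  have hB' : B = U * diagonal s * Vᵀ := by
    ext a b
    rw [hB, mul_diagonal_mul_transpose_apply]
    exact Finset.sum_congr rfl fun i _ => by simp only [U, V, submatrix_apply, id]; ring
  have hA' : A = U * diagonal (fun i : Fin (min m n) => if (i : ℕ) < r then s i else 0) * Vᵀ := by
    ext a b
    rw [hA, mul_diagonal_mul_transpose_apply]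
    refine Finset.sum_congr rfl fun i _ => ?_
    split_ifs
    · simp only [U, V, submatrix_apply, id]; ring
    · simp
  refine ⟨abs_dotProduct_mulVec_sub_truncation_le
    (transpose_submatrix_mul_submatrix_self hU (Fin.castLE_injective _))
    (transpose_submatrix_mul_submatrix_self hV (Fin.castLE_injective _)) _ hσ0 hs hB' hA'
    hNA1 (fun y => (hNA2 y).mp) hNAt1 (fun x => (hNAt2 x).mp) x y, ?_⟩
  gcongr
  exacts [sum_sq_transpose_mulVec_le hNAt1 x, sum_sq_transpose_mulVec_le hNA1 y]

/-- Error bound for a rank-`r` truncated-SVD approximation `A` of `B`: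
`|xᵀBy − xᵀAy| ≤ σ_{r+1}(B)·‖N(Aᵀ)ᵀx‖₂·‖N(A)ᵀy‖₂ ≤ σ_{r+1}(B)·‖x‖₂·‖y‖₂`,
where the SVD data of `B` is given explicitly (`B = UΣVᵀ` with orthogonal `U`,
`V` and nonincreasing nonnegative singular values `s`), `A` keeps the first
`r` singular terms, and `NA`, `NAt` are matrices whose columns form
orthonormal bases of the null spaces of `A` and `Aᵀ` respectively. -/
theorem svd_truncation_error_bound (m n r : ℕ) (hr : r ≤ min m n)
    (B A : Matrix (Fin m) (Fin n) ℝ) (hrank : A.rank = r)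
    (Um : Matrix (Fin m) (Fin m) ℝ) (Vm : Matrix (Fin n) (Fin n) ℝ)
    (s : Fin (min m n) → ℝ)
    (hU : Um.transpose * Um = 1) (hV : Vm.transpose * Vm = 1)
    (hmono : Antitone s) (hnonneg : ∀ i, 0 ≤ s i)
    (hB : ∀ a b, B a b = ∑ i : Fin (min m n),
      s i * Um a (Fin.castLE (Nat.min_le_left m n) i) *
        Vm b (Fin.castLE (Nat.min_le_right m n) i))
    (hA : ∀ a b, A a b = ∑ i : Fin (min m n), if (i : ℕ) < r then
      s i * Um a (Fin.castLE (Nat.min_le_left m n) i) *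
        Vm b (Fin.castLE (Nat.min_le_right m n) i) else 0)
    -- the (r+1)-th singular value of B
    (σnext : ℝ) (hσ : σnext = if h : r < min m n then s ⟨r, h⟩ else 0)
    -- orthonormal bases of the null spaces of A and Aᵀ
    (k k' : ℕ)
    (NA : Matrix (Fin n) (Fin k) ℝ) (NAt : Matrix (Fin m) (Fin k') ℝ)
    (hNA1 : NA.transpose * NA = 1)
    (hNA2 : ∀ y : Fin n → ℝ, A.mulVec y = 0 ↔ ∃ z, NA.mulVec z = y)
    (hNAt1 : NAt.transpose * NAt = 1)
    (hNAt2 : ∀ x : Fin m → ℝ, A.transpose.mulVec x = 0 ↔ ∃ z, NAt.mulVec z = x)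
    (x : Fin m → ℝ) (y : Fin n → ℝ) :
    |x ⬝ᵥ B.mulVec y - x ⬝ᵥ A.mulVec y|
        ≤ σnext * Real.sqrt (∑ i, (NAt.transpose.mulVec x i) ^ 2)
            * Real.sqrt (∑ i, (NA.transpose.mulVec y i) ^ 2) ∧
      σnext * Real.sqrt (∑ i, (NAt.transpose.mulVec x i) ^ 2)
          * Real.sqrt (∑ i, (NA.transpose.mulVec y i) ^ 2)
        ≤ σnext * Real.sqrt (∑ i, (x i) ^ 2) * Real.sqrt (∑ i, (y i) ^ 2) :=
  svd_truncation_error_bound_general m n r B A Um Vm s hU hV hmono hnonneg hB hA σnext hσ k k' NA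
    NAt hNA1 hNA2 hNAt1 hNAt2 x y
end

section
/- In a two-player zero-sum limited-perception game that is maximin-attainable for the first player, any maximin strategy x* (maximizing h₁(x) = min_k P⁻(u₁,c₁,x,e_k)) satisfies x* ∈ argmax_x g_R(x) for every best response function R, i.e., (x*, y*) is a Stackelberg equilibrium for any y* minimizing y ↦ P⁺(u₂,c₂,x*,y); consequently, by the ordering V_h ≤ V_n ≤ V_s, every Nash value of the first player equals the maximin value V_h. -/
variable {U : Type*}

variable {S₁ S₂ : Type*} [Fintype S₁] [Fintype S₂]

/-!
Every perceived payoff `u'` in the narrow set `N(u₁, c₁, c₂)` has its `c₂`-concretizations among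
the `c₁`-concretizations of `u₁`. Since payoffs are linear in the opponent's mixed strategy, the
maximin objective `h₁(x)` is therefore below `P⁻(u', c₂, x, y)` for every `u' ∈ N` and every `y`,
hence below the robust payoff `g(x) = inf_{u' ∈ N} P⁻(u', c₂, x, f u')` against any responses `f`.
For a best response function `R`, maximin-attainability gives
`g_R(x) ≤ sup g_R = V_h = h₁(x*) ≤ g_R(x*)`.
For a Nash pair `(xₙ, Rₙ)`, `V_h = h₁(x*) ≤ g(x*) ≤ g(xₙ)` by the equilibrium condition, and
conversely `g(xₙ) ≤ V_h` because `Rₙ` extends to a best response function: best responses exist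
since `y ↦ P⁺(u', c₂, x, y)` is a supremum of linear functions, hence lower semicontinuous, and
attains its minimum on the compact simplex.
-/

section

variable {P : U → ℕ∞ → U}

namespace PathIndep

theorem apply_eq_self_of_le (hP : PathIndep P) {u : U} {c c' : ℕ∞} (hc : 1 ≤ c)
    (hcc' : c ≤ c') (hc' : c' ≠ ⊤) (hu : P u c = u) : P u c' = u := by
  have h := hP u c c' hc (ne_top_of_le_ne_top hc' hcc') (hc.trans hcc') hc'
  rwa [hu, min_eq_left hcc', hu] at h

theorem apply_eq_self_of_kappa_le (hP : PathIndep P) {u : U} {c : ℕ∞} (hc' : c ≠ ⊤)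
    (hk : kappa P u ≤ c) : P u c = u := by
  obtain ⟨c₀, ⟨hc₀, hu⟩, hc₀c⟩ := sInf_lt_iff.mp ((ENat.lt_add_one_iff hc').mpr hk)
  exact hP.apply_eq_self_of_le hc₀ ((ENat.lt_add_one_iff hc').mp hc₀c) hc' hu

theorem kappa_apply_le (hP : PathIndep P) (u : U) {c : ℕ∞} (hc : 1 ≤ c) (hc' : c ≠ ⊤) :
    kappa P (P u c) ≤ c :=
  sInf_le ⟨hc, by rw [hP u c c hc hc' hc hc', min_self]⟩

end PathIndep

theorem mem_concr_iff_of_kappa_le {v w : U} {c : ℕ∞} (hk : kappa P v ≤ c) :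
    w ∈ concr P v c ↔ P w c = v := by
  show P w (max (kappa P v) c) = v ↔ _
  rw [max_eq_right hk]

theorem PathIndep.self_mem_concr (hP : PathIndep P) {u : U} {c : ℕ∞} (hc' : c ≠ ⊤)
    (hk : kappa P u ≤ c) : u ∈ concr P u c :=
  (mem_concr_iff_of_kappa_le hk).mpr (hP.apply_eq_self_of_kappa_le hc' hk)

theorem self_mem_narrowSet {v : U} {c₁ c₂ : ℕ∞} (hk : kappa P v ≤ c₂) :
    v ∈ narrowSet P v c₁ c₂ :=
  ⟨hk, rfl⟩

theorem PathIndep.concr_subset_of_mem_narrowSet (hP : PathIndep P) {u v : U} {c₁ c₂ : ℕ∞}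
    (hc₁ : 1 ≤ c₁) (h12 : c₁ ≤ c₂) (hc₂ : c₂ ≠ ⊤) (hv : kappa P v ≤ c₁)
    (hu : u ∈ narrowSet P v c₁ c₂) : concr P u c₂ ⊆ concr P v c₁ := by
  intro w hw
  rw [mem_concr_iff_of_kappa_le hu.1] at hw
  rw [mem_concr_iff_of_kappa_le hv]
  have hwu : P w c₁ = P u c₁ := by
    rw [← hw, hP w c₂ c₁ (hc₁.trans h12) hc₂ hc₁ (ne_top_of_le_ne_top hc₂ h12),
      min_eq_right h12]
  have hvu : P v c₁ = P u c₁ := by simpa only [min_eq_left h12] using hu.2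
  rw [hwu, ← hvu, hP.apply_eq_self_of_kappa_le (ne_top_of_le_ne_top hc₂ h12) hv]

end

theorem pay_eq_sum_mul_pay_single [DecidableEq S₂] (w : S₁ → S₂ → ℝ) (x : S₁ → ℝ)
    (y : S₂ → ℝ) : pay w x y = ∑ k, y k * pay w x (Pi.single k 1) := by
  simp only [pay, Pi.single_apply, mul_ite, mul_one, mul_zero, Finset.sum_ite_eq',
    Finset.mem_univ, if_true, Finset.mul_sum]
  rw [Finset.sum_comm]
  exact Finset.sum_congr rfl fun _ _ => Finset.sum_congr rfl fun _ _ => by ring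

theorem abs_pay_le {w : S₁ → S₂ → ℝ} {x : S₁ → ℝ} {y : S₂ → ℝ} {B : ℝ}
    (hw : ∀ a b, |w a b| ≤ B) (hx : x ∈ stdSimplex ℝ S₁) (hy : y ∈ stdSimplex ℝ S₂) :
    |pay w x y| ≤ B := by
  calc |pay w x y| ≤ ∑ a, ∑ b, x a * B * y b := by
        refine (Finset.abs_sum_le_sum_abs _ _).trans (Finset.sum_le_sum fun a _ => ?_)
        refine (Finset.abs_sum_le_sum_abs _ _).trans (Finset.sum_le_sum fun b _ => ?_)
        rw [abs_mul, abs_mul, abs_of_nonneg (hx.1 a), abs_of_nonneg (hy.1 b)]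
        gcongr
        exacts [hy.1 b, hx.1 a, hw a b]
    _ = B := by simp only [← Finset.mul_sum, hy.2, mul_one, ← Finset.sum_mul, hx.2, one_mul]

theorem continuous_pay (w : S₁ → S₂ → ℝ) (x : S₁ → ℝ) : Continuous (pay w x) := by
  unfold pay
  fun_prop

noncomputable def maximinObj [Nonempty S₂] [DecidableEq S₂]
    (P : (S₁ → S₂ → ℝ) → ℕ∞ → (S₁ → S₂ → ℝ)) (v : S₁ → S₂ → ℝ) (c : ℕ∞) (x : S₁ → ℝ) : ℝ :=
  Finset.univ.inf' Finset.univ_nonempty fun k : S₂ => Pm P v c x (Pi.single k 1)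

/-- The paper's `g_R(x)` is `robustPayoff P v c₁ c₂ x (R · x)`. -/
noncomputable def robustPayoff (P : (S₁ → S₂ → ℝ) → ℕ∞ → (S₁ → S₂ → ℝ))
    (v : S₁ → S₂ → ℝ) (c₁ c₂ : ℕ∞) (x : S₁ → ℝ) (f : (S₁ → S₂ → ℝ) → S₂ → ℝ) : ℝ :=
  sInf {z | ∃ u ∈ narrowSet P v c₁ c₂, z = Pm P u c₂ x (f u)}

noncomputable def stackelbergValue (P : (S₁ → S₂ → ℝ) → ℕ∞ → (S₁ → S₂ → ℝ))
    (v : S₁ → S₂ → ℝ) (c₁ c₂ : ℕ∞) (R : (S₁ → S₂ → ℝ) → (S₁ → ℝ) → S₂ → ℝ) : ℝ :=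
  sSup {z | ∃ x ∈ stdSimplex ℝ S₁, z = robustPayoff P v c₁ c₂ x fun u => R u x}

def IsBestResponse (P : (S₁ → S₂ → ℝ) → ℕ∞ → (S₁ → S₂ → ℝ)) (N : Set (S₁ → S₂ → ℝ))
    (c : ℕ∞) (R : (S₁ → S₂ → ℝ) → (S₁ → ℝ) → S₂ → ℝ) : Prop :=
  ∀ u ∈ N, ∀ x ∈ stdSimplex ℝ S₁, R u x ∈ stdSimplex ℝ S₂ ∧
    ∀ y ∈ stdSimplex ℝ S₂, Pp P u c x (R u x) ≤ Pp P u c x y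

section Perception

variable {P : (S₁ → S₂ → ℝ) → ℕ∞ → (S₁ → S₂ → ℝ)}

theorem BoundedConcr.exists_abs_pay_concr_le (hbdd : BoundedConcr P) (v : S₁ → S₂ → ℝ) :
    ∃ B, ∀ c, ∀ w ∈ concr P v c, ∀ x ∈ stdSimplex ℝ S₁, ∀ y ∈ stdSimplex ℝ S₂,
      |pay w x y| ≤ B := by
  obtain ⟨B, hB⟩ := hbdd v
  exact ⟨B, fun c w hw x hx y hy => abs_pay_le (hB w _ hw) hx hy⟩

theorem BoundedConcr.bddBelow_pay_concr (hbdd : BoundedConcr P) (v : S₁ → S₂ → ℝ) (c : ℕ∞)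
    {x : S₁ → ℝ} {y : S₂ → ℝ} (hx : x ∈ stdSimplex ℝ S₁) (hy : y ∈ stdSimplex ℝ S₂) :
    BddBelow {z | ∃ w ∈ concr P v c, z = pay w x y} := by
  obtain ⟨B, hB⟩ := hbdd.exists_abs_pay_concr_le v
  refine ⟨-B, ?_⟩
  rintro _ ⟨w, hw, rfl⟩
  exact (abs_le.mp (hB c w hw x hx y hy)).1

theorem BoundedConcr.bddAbove_pay_concr (hbdd : BoundedConcr P) (v : S₁ → S₂ → ℝ) (c : ℕ∞)
    {x : S₁ → ℝ} {y : S₂ → ℝ} (hx : x ∈ stdSimplex ℝ S₁) (hy : y ∈ stdSimplex ℝ S₂) :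
    BddAbove {z | ∃ w ∈ concr P v c, z = pay w x y} := by
  obtain ⟨B, hB⟩ := hbdd.exists_abs_pay_concr_le v
  refine ⟨B, ?_⟩
  rintro _ ⟨w, hw, rfl⟩
  exact (abs_le.mp (hB c w hw x hx y hy)).2

theorem BoundedConcr.Pm_le_pay (hbdd : BoundedConcr P) {v w : S₁ → S₂ → ℝ} {c : ℕ∞}
    {x : S₁ → ℝ} {y : S₂ → ℝ} (hx : x ∈ stdSimplex ℝ S₁) (hy : y ∈ stdSimplex ℝ S₂)
    (hw : w ∈ concr P v c) : Pm P v c x y ≤ pay w x y :=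
  csInf_le (hbdd.bddBelow_pay_concr v c hx hy) ⟨w, hw, rfl⟩

theorem Pp_eq_iSup (v : S₁ → S₂ → ℝ) (c : ℕ∞) (x : S₁ → ℝ) (y : S₂ → ℝ) :
    Pp P v c x y = ⨆ w : concr P v c, pay w x y := by
  rw [Pp, iSup]
  congr 1
  ext z
  simp [eq_comm]

theorem BoundedConcr.exists_isMinOn_Pp [Nonempty S₂] (hbdd : BoundedConcr P)
    (v : S₁ → S₂ → ℝ) (c : ℕ∞) {x : S₁ → ℝ} (hx : x ∈ stdSimplex ℝ S₁) :
    ∃ y ∈ stdSimplex ℝ S₂, IsMinOn (Pp P v c x) (stdSimplex ℝ S₂) y := by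
  have hlsc : LowerSemicontinuousOn (Pp P v c x) (stdSimplex ℝ S₂) := by
    simp only [funext (Pp_eq_iSup v c x)]
    refine lowerSemicontinuousOn_ciSup (fun y hy => ?_)
      fun w => (continuous_pay _ x).lowerSemicontinuous.lowerSemicontinuousOn _
    simpa [Set.range, eq_comm] using hbdd.bddAbove_pay_concr v c hx hy
  exact hlsc.exists_isMinOn (Set.nonempty_coe_sort.mp inferInstance) (isCompact_stdSimplex ℝ S₂)

theorem BoundedConcr.exists_isBestResponse_eq [Nonempty S₂] (hbdd : BoundedConcr P)
    (N : Set (S₁ → S₂ → ℝ)) (c : ℕ∞) {x₀ : S₁ → ℝ} (r₀ : (S₁ → S₂ → ℝ) → S₂ → ℝ)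
    (hr₀ : ∀ u ∈ N, r₀ u ∈ stdSimplex ℝ S₂ ∧
      ∀ y ∈ stdSimplex ℝ S₂, Pp P u c x₀ (r₀ u) ≤ Pp P u c x₀ y) :
    ∃ R, IsBestResponse P N c R ∧ ∀ u, R u x₀ = r₀ u := by
  classical
  choose! r hr_mem hr_min using fun u (x : S₁ → ℝ) (hx : x ∈ stdSimplex ℝ S₁) =>
    hbdd.exists_isMinOn_Pp u c hx
  refine ⟨fun u => Function.update (r u) x₀ (r₀ u), fun u hu x hx => ?_,
    fun u => Function.update_self ..⟩
  rcases eq_or_ne x x₀ with rfl | hne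
  · simpa only [Function.update_self] using hr₀ u hu
  · simpa only [Function.update_of_ne hne] using
      ⟨hr_mem u x hx, isMinOn_iff.mp (hr_min u x hx)⟩

section Game

variable [Nonempty S₂] [DecidableEq S₂]

theorem maximinObj_le_pay (hbdd : BoundedConcr P) {v w : S₁ → S₂ → ℝ} {c : ℕ∞} {x : S₁ → ℝ}
    {y : S₂ → ℝ} (hx : x ∈ stdSimplex ℝ S₁) (hy : y ∈ stdSimplex ℝ S₂) (hw : w ∈ concr P v c) :
    maximinObj P v c x ≤ pay w x y := by
  have hsingle : ∀ k, maximinObj P v c x ≤ pay w x (Pi.single k 1) := fun k =>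
    (Finset.inf'_le _ (Finset.mem_univ k)).trans
      (hbdd.Pm_le_pay hx (single_mem_stdSimplex ℝ k) hw)
  calc maximinObj P v c x = ∑ k, y k * maximinObj P v c x := by
        rw [← Finset.sum_mul, hy.2, one_mul]
    _ ≤ ∑ k, y k * pay w x (Pi.single k 1) :=
        Finset.sum_le_sum fun k _ => mul_le_mul_of_nonneg_left (hsingle k) (hy.1 k)
    _ = pay w x y := (pay_eq_sum_mul_pay_single w x y).symm

variable {v : S₁ → S₂ → ℝ} {c₁ c₂ : ℕ∞} {x : S₁ → ℝ}

theorem maximinObj_le_Pm_of_mem_narrowSet (hP : PathIndep P) (hbdd : BoundedConcr P)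
    (hc₁ : 1 ≤ c₁) (h12 : c₁ ≤ c₂) (hc₂ : c₂ ≠ ⊤) (hv : kappa P v ≤ c₁)
    (hx : x ∈ stdSimplex ℝ S₁) {u : S₁ → S₂ → ℝ} (hu : u ∈ narrowSet P v c₁ c₂)
    {y : S₂ → ℝ} (hy : y ∈ stdSimplex ℝ S₂) : maximinObj P v c₁ x ≤ Pm P u c₂ x y :=
  le_csInf ⟨_, u, hP.self_mem_concr hc₂ hu.1, rfl⟩ <| by
    rintro _ ⟨w, hw, rfl⟩
    exact maximinObj_le_pay hbdd hx hy (hP.concr_subset_of_mem_narrowSet hc₁ h12 hc₂ hv hu hw)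

theorem maximinObj_le_robustPayoff (hP : PathIndep P) (hbdd : BoundedConcr P)
    (hc₁ : 1 ≤ c₁) (h12 : c₁ ≤ c₂) (hc₂ : c₂ ≠ ⊤) (hv : kappa P v ≤ c₁)
    (hx : x ∈ stdSimplex ℝ S₁) {f : (S₁ → S₂ → ℝ) → S₂ → ℝ}
    (hf : ∀ u ∈ narrowSet P v c₁ c₂, f u ∈ stdSimplex ℝ S₂) :
    maximinObj P v c₁ x ≤ robustPayoff P v c₁ c₂ x f :=
  le_csInf ⟨_, v, self_mem_narrowSet (hv.trans h12), rfl⟩ <| by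
    rintro _ ⟨u, hu, rfl⟩
    exact maximinObj_le_Pm_of_mem_narrowSet hP hbdd hc₁ h12 hc₂ hv hx hu (hf u hu)

theorem robustPayoff_le_pay (hP : PathIndep P) (hbdd : BoundedConcr P)
    (hc₁ : 1 ≤ c₁) (h12 : c₁ ≤ c₂) (hc₂ : c₂ ≠ ⊤) (hv : kappa P v ≤ c₁)
    (hx : x ∈ stdSimplex ℝ S₁) {f : (S₁ → S₂ → ℝ) → S₂ → ℝ}
    (hf : ∀ u ∈ narrowSet P v c₁ c₂, f u ∈ stdSimplex ℝ S₂) :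
    robustPayoff P v c₁ c₂ x f ≤ pay v x (f v) := by
  have hvN : v ∈ narrowSet P v c₁ c₂ := self_mem_narrowSet (hv.trans h12)
  have hbddBelow : BddBelow {z | ∃ u ∈ narrowSet P v c₁ c₂, z = Pm P u c₂ x (f u)} := by
    refine ⟨maximinObj P v c₁ x, ?_⟩
    rintro _ ⟨u, hu, rfl⟩
    exact maximinObj_le_Pm_of_mem_narrowSet hP hbdd hc₁ h12 hc₂ hv hx hu (hf u hu)
  exact (csInf_le hbddBelow ⟨v, hvN, rfl⟩).trans
    (hbdd.Pm_le_pay hx (hf v hvN) (hP.self_mem_concr hc₂ (hv.trans h12)))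

theorem robustPayoff_le_stackelbergValue (hP : PathIndep P) (hbdd : BoundedConcr P)
    (hc₁ : 1 ≤ c₁) (h12 : c₁ ≤ c₂) (hc₂ : c₂ ≠ ⊤) (hv : kappa P v ≤ c₁)
    {R : (S₁ → S₂ → ℝ) → (S₁ → ℝ) → S₂ → ℝ}
    (hR : ∀ u ∈ narrowSet P v c₁ c₂, ∀ x ∈ stdSimplex ℝ S₁, R u x ∈ stdSimplex ℝ S₂)
    (hx : x ∈ stdSimplex ℝ S₁) :
    robustPayoff P v c₁ c₂ x (fun u => R u x) ≤ stackelbergValue P v c₁ c₂ R := by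
  obtain ⟨B, hB⟩ := hbdd.exists_abs_pay_concr_le v
  have hvN : v ∈ narrowSet P v c₁ c₂ := self_mem_narrowSet (hv.trans h12)
  have hvv : v ∈ concr P v c₁ := hP.self_mem_concr (ne_top_of_le_ne_top hc₂ h12) hv
  refine le_csSup ⟨B, ?_⟩ ⟨x, hx, rfl⟩
  rintro _ ⟨x', hx', rfl⟩
  exact (robustPayoff_le_pay hP hbdd hc₁ h12 hc₂ hv hx' fun u hu => hR u hu x' hx').trans
    (abs_le.mp (hB c₁ v hvv x' hx' _ (hR v hvN x' hx'))).2

end Game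

end Perception

theorem maximin_attainable_equilibrium_general [Nonempty S₂] [DecidableEq S₂]
    (P : (S₁ → S₂ → ℝ) → ℕ∞ → (S₁ → S₂ → ℝ))
    (hpath : PathIndep P) (hbdd : BoundedConcr P)
    (u₁ u₂ : S₁ → S₂ → ℝ) (c₁ c₂ : ℕ∞)
    (hc1 : 1 ≤ c₁) (h12 : c₁ ≤ c₂) (hc2 : c₂ ≠ ⊤)
    (hu12 : u₁ = P u₂ c₁)
    -- the maximin objective h₁ and maximin value V_h
    (h₁ : (S₁ → ℝ) → ℝ)
    (hh₁ : ∀ x, h₁ x = Finset.univ.inf' Finset.univ_nonempty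
      (fun k : S₂ => Pm P u₁ c₁ x (Pi.single k 1)))
    (Vh : ℝ) (hVh : Vh = sSup {z : ℝ | ∃ x ∈ stdSimplex ℝ S₁, z = h₁ x})
    -- the instance is maximin-attainable for the first player
    (hattain : ∀ R : (S₁ → S₂ → ℝ) → (S₁ → ℝ) → (S₂ → ℝ),
      (∀ u' ∈ narrowSet P u₁ c₁ c₂, ∀ x ∈ stdSimplex ℝ S₁,
        R u' x ∈ stdSimplex ℝ S₂ ∧
          ∀ y ∈ stdSimplex ℝ S₂, Pp P u' c₂ x (R u' x) ≤ Pp P u' c₂ x y) →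
      Vh = sSup {z : ℝ | ∃ x ∈ stdSimplex ℝ S₁,
        z = sInf {w : ℝ | ∃ u' ∈ narrowSet P u₁ c₁ c₂,
          w = Pm P u' c₂ x (R u' x)}})
    -- x* is a maximin strategy
    (xs : S₁ → ℝ) (hxs : xs ∈ stdSimplex ℝ S₁)
    (hxsMax : ∀ x ∈ stdSimplex ℝ S₁, h₁ x ≤ h₁ xs) :
    -- x* maximizes the Stackelberg objective of every best response function
    (∀ R : (S₁ → S₂ → ℝ) → (S₁ → ℝ) → (S₂ → ℝ),
      (∀ u' ∈ narrowSet P u₁ c₁ c₂, ∀ x ∈ stdSimplex ℝ S₁,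
        R u' x ∈ stdSimplex ℝ S₂ ∧
          ∀ y ∈ stdSimplex ℝ S₂, Pp P u' c₂ x (R u' x) ≤ Pp P u' c₂ x y) →
      ∀ x ∈ stdSimplex ℝ S₁,
        sInf {w : ℝ | ∃ u' ∈ narrowSet P u₁ c₁ c₂, w = Pm P u' c₂ x (R u' x)}
          ≤ sInf {w : ℝ | ∃ u' ∈ narrowSet P u₁ c₁ c₂, w = Pm P u' c₂ xs (R u' xs)}) ∧
    -- every Nash value of the first player equals the maximin value V_h
    (∀ (xn : S₁ → ℝ) (Rn : (S₁ → S₂ → ℝ) → (S₂ → ℝ)),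
      xn ∈ stdSimplex ℝ S₁ →
      (∀ u' ∈ narrowSet P u₁ c₁ c₂, Rn u' ∈ stdSimplex ℝ S₂ ∧
        ∀ y ∈ stdSimplex ℝ S₂, Pp P u' c₂ xn (Rn u') ≤ Pp P u' c₂ xn y) →
      (∀ x ∈ stdSimplex ℝ S₁,
        sInf {z : ℝ | ∃ u' ∈ narrowSet P u₁ c₁ c₂, z = Pm P u' c₂ x (Rn u')}
          ≤ sInf {z : ℝ | ∃ u' ∈ narrowSet P u₁ c₁ c₂, z = Pm P u' c₂ xn (Rn u')}) →
      sInf {z : ℝ | ∃ u' ∈ narrowSet P u₁ c₁ c₂, z = Pm P u' c₂ xn (Rn u')} = Vh) := by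
  obtain rfl : h₁ = maximinObj P u₁ c₁ := funext hh₁
  have hv : kappa P u₁ ≤ c₁ := hu12 ▸ hpath.kappa_apply_le u₂ hc1 (ne_top_of_le_ne_top hc2 h12)
  have hVxs : Vh = maximinObj P u₁ c₁ xs :=
    hVh.trans (IsGreatest.csSup_eq ⟨⟨xs, hxs, rfl⟩, by rintro _ ⟨x, hx, rfl⟩; exact hxsMax x hx⟩)
  have hVh_le : ∀ f, (∀ u ∈ narrowSet P u₁ c₁ c₂, f u ∈ stdSimplex ℝ S₂) →
      Vh ≤ robustPayoff P u₁ c₁ c₂ xs f := fun f hf =>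
    hVxs ▸ maximinObj_le_robustPayoff hpath hbdd hc1 h12 hc2 hv hxs hf
  refine ⟨fun R hR x hx => ?_, fun xn Rn hxn hRn hxnMax => ?_⟩
  · calc robustPayoff P u₁ c₁ c₂ x (fun u => R u x)
          ≤ stackelbergValue P u₁ c₁ c₂ R := robustPayoff_le_stackelbergValue hpath hbdd hc1 h12
            hc2 hv (fun u hu x hx => (hR u hu x hx).1) hx
      _ = Vh := (hattain R hR).symm
      _ ≤ robustPayoff P u₁ c₁ c₂ xs (fun u => R u xs) := hVh_le _ fun u hu => (hR u hu xs hxs).1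
  · obtain ⟨R, hR, hRxn⟩ := hbdd.exists_isBestResponse_eq _ c₂ Rn hRn
    refine le_antisymm ?_ ((hVh_le Rn fun u hu => (hRn u hu).1).trans (hxnMax xs hxs))
    calc robustPayoff P u₁ c₁ c₂ xn Rn = robustPayoff P u₁ c₁ c₂ xn fun u => R u xn := by
          simp only [hRxn]
      _ ≤ stackelbergValue P u₁ c₁ c₂ R := robustPayoff_le_stackelbergValue hpath hbdd hc1 h12
            hc2 hv (fun u hu x hx => (hR u hu x hx).1) hxn
      _ = Vh := (hattain R hR).symm

/-- In a maximin-attainable TZOLP-game, any maximin strategy `x*` of the first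
player maximizes the Stackelberg objective `g_R` for every best response
function `R` (so `(x*, y*)` is a Stackelberg equilibrium for any `y*`
minimizing `y ↦ P⁺(u₂,c₂,x*,y)`), and consequently every Nash value of the
first player equals the maximin value `V_h`. -/
theorem maximin_attainable_equilibrium [Nonempty S₂] [DecidableEq S₂]
    (P : (S₁ → S₂ → ℝ) → ℕ∞ → (S₁ → S₂ → ℝ))
    (hpath : PathIndep P) (htop : PerfectTop P) (hbdd : BoundedConcr P)
    (hodd : OddPerc P)
    (u₁ u₂ : S₁ → S₂ → ℝ) (c₁ c₂ : ℕ∞)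
    (hc1 : 1 ≤ c₁) (h12 : c₁ ≤ c₂) (hc2 : c₂ ≠ ⊤)
    (hu12 : u₁ = P u₂ c₁)
    -- the maximin objective h₁ and maximin value V_h
    (h₁ : (S₁ → ℝ) → ℝ)
    (hh₁ : ∀ x, h₁ x = Finset.univ.inf' Finset.univ_nonempty
      (fun k : S₂ => Pm P u₁ c₁ x (Pi.single k 1)))
    (Vh : ℝ) (hVh : Vh = sSup {z : ℝ | ∃ x ∈ stdSimplex ℝ S₁, z = h₁ x})
    -- the instance is maximin-attainable for the first player
    (hattain : ∀ R : (S₁ → S₂ → ℝ) → (S₁ → ℝ) → (S₂ → ℝ),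
      (∀ u' ∈ narrowSet P u₁ c₁ c₂, ∀ x ∈ stdSimplex ℝ S₁,
        R u' x ∈ stdSimplex ℝ S₂ ∧
          ∀ y ∈ stdSimplex ℝ S₂, Pp P u' c₂ x (R u' x) ≤ Pp P u' c₂ x y) →
      Vh = sSup {z : ℝ | ∃ x ∈ stdSimplex ℝ S₁,
        z = sInf {w : ℝ | ∃ u' ∈ narrowSet P u₁ c₁ c₂,
          w = Pm P u' c₂ x (R u' x)}})
    -- x* is a maximin strategy
    (xs : S₁ → ℝ) (hxs : xs ∈ stdSimplex ℝ S₁)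
    (hxsMax : ∀ x ∈ stdSimplex ℝ S₁, h₁ x ≤ h₁ xs) :
    -- x* maximizes the Stackelberg objective of every best response function
    (∀ R : (S₁ → S₂ → ℝ) → (S₁ → ℝ) → (S₂ → ℝ),
      (∀ u' ∈ narrowSet P u₁ c₁ c₂, ∀ x ∈ stdSimplex ℝ S₁,
        R u' x ∈ stdSimplex ℝ S₂ ∧
          ∀ y ∈ stdSimplex ℝ S₂, Pp P u' c₂ x (R u' x) ≤ Pp P u' c₂ x y) →
      ∀ x ∈ stdSimplex ℝ S₁,
        sInf {w : ℝ | ∃ u' ∈ narrowSet P u₁ c₁ c₂, w = Pm P u' c₂ x (R u' x)}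
          ≤ sInf {w : ℝ | ∃ u' ∈ narrowSet P u₁ c₁ c₂, w = Pm P u' c₂ xs (R u' xs)}) ∧
    -- every Nash value of the first player equals the maximin value V_h
    (∀ (xn : S₁ → ℝ) (Rn : (S₁ → S₂ → ℝ) → (S₂ → ℝ)),
      xn ∈ stdSimplex ℝ S₁ →
      (∀ u' ∈ narrowSet P u₁ c₁ c₂, Rn u' ∈ stdSimplex ℝ S₂ ∧
        ∀ y ∈ stdSimplex ℝ S₂, Pp P u' c₂ xn (Rn u') ≤ Pp P u' c₂ xn y) →
      (∀ x ∈ stdSimplex ℝ S₁,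
        sInf {z : ℝ | ∃ u' ∈ narrowSet P u₁ c₁ c₂, z = Pm P u' c₂ x (Rn u')}
          ≤ sInf {z : ℝ | ∃ u' ∈ narrowSet P u₁ c₁ c₂, z = Pm P u' c₂ xn (Rn u')}) →
      sInf {z : ℝ | ∃ u' ∈ narrowSet P u₁ c₁ c₂, z = Pm P u' c₂ xn (Rn u')} = Vh) :=
  maximin_attainable_equilibrium_general P hpath hbdd u₁ u₂ c₁ c₂ hc1 h12 hc2 hu12 h₁ hh₁ Vh hVh
    hattain xs hxs hxsMax
end
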